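/- arXiv:1910.02888 — 3 statements merged into one kernel-verified Lean document; each statement's English description precedes it below -/
import Mathlib

section
/- Let K be a valued field and F ⊆ K a subfield. Then conv_F(K) := { x ∈ K : ∃ c ∈ F×, v(x) ≥ v(c) } is a valuation subring of K containing the valuation ring of F. -/
/-- `conv_F(K) = { x ∈ K : ∃ c ∈ F×, v x ≥ v c }` is a valuation subring of `K`
containing the valuation ring of `F`. -/
theorem stmt_1 {K Γ : Type*} [Field K] [AddCommGroup Γ] [LinearOrder Γ] [IsOrderedAddMonoid Γ]
    (v : AddValuation K (WithTop Γ)) (F : Subfield K) :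
    ∃ O : ValuationSubring K,
      (∀ x : K, x ∈ O ↔ ∃ c ∈ F, c ≠ 0 ∧ v c ≤ v x) ∧
      (∀ x ∈ F, (0 : WithTop Γ) ≤ v x → x ∈ O) := by
  refine ⟨{ carrier := {x | ∃ c ∈ F, c ≠ 0 ∧ v c ≤ v x}
            one_mem' := ⟨1, F.one_mem, one_ne_zero, le_rfl⟩
            zero_mem' := ⟨1, F.one_mem, one_ne_zero, by
              rw [v.map_zero]; exact le_top⟩
            mul_mem' := ?_
            add_mem' := ?_
            neg_mem' := ?_
            mem_or_inv_mem' := ?_ }, fun x => Iff.rfl, ?_⟩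
  · rintro a b ⟨c, hc, hc0, hvc⟩ ⟨d, hd, hd0, hvd⟩
    exact ⟨c * d, F.mul_mem hc hd, mul_ne_zero hc0 hd0,
      by rw [v.map_mul, v.map_mul]; exact add_le_add hvc hvd⟩
  · rintro a b ⟨c, hc, hc0, hvc⟩ ⟨d, hd, hd0, hvd⟩
    rcases le_total (v c) (v d) with h | h
    · exact ⟨c, hc, hc0, le_trans (le_min hvc (h.trans hvd)) (v.map_add a b)⟩
    · exact ⟨d, hd, hd0, le_trans (le_min (h.trans hvc) hvd) (v.map_add a b)⟩
  · rintro a ⟨c, hc, hc0, hvc⟩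
    exact ⟨c, hc, hc0, by rwa [v.map_neg]⟩
  · intro x
    rcases le_total (0 : WithTop Γ) (v x) with h | h
    · exact Or.inl ⟨1, F.one_mem, one_ne_zero, by rwa [v.map_one]⟩
    · refine Or.inr ⟨1, F.one_mem, one_ne_zero, ?_⟩
      rw [v.map_one]
      rcases eq_or_ne x 0 with rfl | hx
      · simp [v.map_zero]
      · rw [v.map_inv]
        lift v x to Γ using (v.ne_top_iff.mpr hx) with a ha
        rw [← WithTop.LinearOrderedAddCommGroup.coe_neg]
        exact_mod_cast neg_nonneg.mpr (by exact_mod_cast h)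
  · intro x hx h0
    rcases eq_or_ne x 0 with rfl | hx0
    · exact ⟨1, F.one_mem, one_ne_zero, by rw [v.map_zero]; exact le_top⟩
    · exact ⟨x, hx, hx0, le_rfl⟩
end

section
/- Let K be a valued field with value group Γ(K), and F ⊆ K a subfield such that the standard part property holds (every element of K whose valuation exceeds that of some element of F is within infinitesimal distance, relative to F, of an element of F). Then the value group Γ(F) = v(F×) is a convex subgroup of Γ(K): if 0 ≤ γ ≤ δ with δ ∈ Γ(F) and γ ∈ Γ(K), then γ ∈ Γ(F). -/
/-!
If `0 < v a ≤ v d` with `d ∈ F×`, then `a` lies strictly above `v 1 = 0 ∈ Γ(F)`, so it has a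
standard part `a' ∈ F`. Since `v (a - a') > v d ≥ v a`, the ultrametric inequality forces
`v a' = v a`.
-/

namespace AddValuation

variable {K Γ : Type*} [Field K] [AddCommGroup Γ] [LinearOrder Γ] [IsOrderedAddMonoid Γ]

def HasStandardPartProperty (v : AddValuation K (WithTop Γ)) (F : Subfield K) : Prop :=
  ∀ b : K, (∃ a ∈ F, a ≠ 0 ∧ v a < v b) → ∃ a' ∈ F, ∀ c ∈ F, c ≠ 0 → v c < v (b - a')

theorem HasStandardPartProperty.exists_mem_valuation_eq {v : AddValuation K (WithTop Γ)}
    {F : Subfield K} (hstd : v.HasStandardPartProperty F) {b : K}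
    (hlow : ∃ a ∈ F, a ≠ 0 ∧ v a < v b) {c : K} (hc : c ∈ F) (hc0 : c ≠ 0) (hbc : v b ≤ v c) :
    ∃ a' ∈ F, a' ≠ 0 ∧ v a' = v b := by
  obtain ⟨a', ha'F, ha'⟩ := hstd b hlow
  have hb_lt : v b < v (b - a') := hbc.trans_lt (ha' c hc hc0)
  have hva' : v a' = v b := v.map_eq_of_lt_sub (by rwa [v.map_sub_swap])
  refine ⟨a', ha'F, fun ha'0 => ?_, hva'⟩
  rw [ha'0, sub_zero] at hb_lt
  exact hb_lt.false

end AddValuation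

theorem stmt_3_general {K Γ : Type*} [Field K] [AddCommGroup Γ] [LinearOrder Γ] [IsOrderedAddMonoid Γ]
    (v : AddValuation K (WithTop Γ)) (F : Subfield K)
    (hstd : ∀ b : K, (∃ a ∈ F, a ≠ 0 ∧ v a < v b) →
      ∃ a' ∈ F, ∀ c ∈ F, c ≠ 0 → v c < v (b - a'))
    (a : K) (d : K) (hd : d ∈ F) (hd0 : d ≠ 0)
    (h0 : (0 : WithTop Γ) ≤ v a) (hle : v a ≤ v d) :
    ∃ a' ∈ F, a' ≠ 0 ∧ v a' = v a := by
  rcases h0.eq_or_lt with h0 | h0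
  · exact ⟨1, F.one_mem, one_ne_zero, by rw [v.map_one, h0]⟩
  exact AddValuation.HasStandardPartProperty.exists_mem_valuation_eq hstd
    ⟨1, F.one_mem, one_ne_zero, by rwa [v.map_one]⟩ hd hd0 hle

/-- If `F ⊆ K` has the standard part property, then `Γ(F) = v(F×)` is a convex
subgroup of `Γ(K)`: if `0 ≤ v a ≤ v d` with `d ∈ F×` and `a ∈ K×`, then
`v a ∈ v(F×)`. -/
theorem stmt_3 {K Γ : Type*} [Field K] [AddCommGroup Γ] [LinearOrder Γ] [IsOrderedAddMonoid Γ]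
    (v : AddValuation K (WithTop Γ)) (F : Subfield K)
    (hstd : ∀ b : K, (∃ a ∈ F, a ≠ 0 ∧ v a < v b) →
      ∃ a' ∈ F, ∀ c ∈ F, c ≠ 0 → v c < v (b - a'))
    (a : K) (ha : a ≠ 0) (d : K) (hd : d ∈ F) (hd0 : d ≠ 0)
    (h0 : (0 : WithTop Γ) ≤ v a) (hle : v a ≤ v d) :
    ∃ a' ∈ F, a' ≠ 0 ∧ v a' = v a :=
  stmt_3_general v F hstd a d hd hd0 h0 hle
end

section
/- Let K be an algebraically closed field and C ⊆ K a set which is a ball minus finitely many proper sub-balls with respect to a valuation v on K: C = B \ (B₁ ∪ … ∪ Bₘ) where B = { x : v(x − c) > γ } and each Bᵢ ⊊ B is a ball. If B properly contains each Bᵢ and m balls cannot cover B (e.g., because the residue field is infinite), then C is nonempty. -/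
/-!
Fix points `yᵢ ∈ B \ Bᵢ` and centres `cᵢ ∈ Bᵢ`. Every two points of `Bᵢ` are strictly closer
than `yᵢ` is to `cᵢ`, so if `e` realises the smallest of the distances `v (yᵢ - cᵢ)` (all of which
exceed `γ`), a ball `Bᵢ` contains at most one point of a family at mutual distance `v e`. Since the
residue field is infinite, `c + e * f j` is an infinite such family inside `B`, so one of its
points lies in no `Bᵢ`.
-/

namespace AddValuation

variable {K Γ : Type*} [AddCommGroup Γ] [LinearOrder Γ] [IsOrderedAddMonoid Γ] [Ring K]
  (v : AddValuation K (WithTop Γ))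

def IsBall (S : Set K) : Prop :=
  ∃ c : K, ∃ γ : Γ,
    S = {x : K | (γ : WithTop Γ) < v (x - c)} ∨ S = {x : K | (γ : WithTop Γ) ≤ v (x - c)}

theorem min_map_sub_le_map_sub (x y c : K) : min (v (x - c)) (v (y - c)) ≤ v (x - y) := by
  simpa only [sub_sub_sub_cancel_right] using v.map_sub (x - c) (y - c)

variable {v}

theorem IsBall.exists_center_map_sub_lt {S : Set K} (hS : v.IsBall S) {y : K} (hy : y ∉ S) :
    ∃ c ∈ S, ∀ x ∈ S, ∀ x' ∈ S, v (y - c) < v (x - x') := by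
  obtain ⟨c, γ, rfl | rfl⟩ := hS
  all_goals
    refine ⟨c, by simp, fun x hx x' hx' => ?_⟩
    simp only [Set.mem_ofPred_eq, not_lt, not_le] at hx hx' hy
  · exact hy.trans_lt ((lt_min hx hx').trans_le (v.min_map_sub_le_map_sub x x' c))
  · exact hy.trans_le ((le_min hx hx').trans (v.min_map_sub_le_map_sub x x' c))

theorem exists_le_forall_le_of_finite {ι : Type*} [Finite ι] {γ : Γ} (d : ι → K)
    (hd : ∀ i, (γ : WithTop Γ) < v (d i)) :
    ∃ e : K, (γ : WithTop Γ) < v e ∧ ∀ i, v e ≤ v (d i) := by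
  cases isEmpty_or_nonempty ι
  · exact ⟨0, by simp, isEmptyElim⟩
  · obtain ⟨i, hi⟩ := Finite.exists_min (fun i => v (d i))
    exact ⟨d i, hd i, hi⟩

theorem exists_seq_map_sub_eq {f : ℕ → K} (hf0 : ∀ i, (0 : WithTop Γ) ≤ v (f i))
    (hf : ∀ i j, i ≠ j → v (f i - f j) = 0) (c e : K) :
    ∃ p : ℕ → K, (∀ j, v e ≤ v (p j - c)) ∧ ∀ j k, j ≠ k → v (p j - p k) = v e := by
  refine ⟨fun j => c + e * f j, fun j => ?_, fun j k hjk => ?_⟩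
  · simpa [v.map_mul] using le_add_of_nonneg_right (hf0 j)
  · rw [add_sub_add_left_eq_sub, ← mul_sub, v.map_mul, hf j k hjk, add_zero]

theorem exists_notMem_iUnion_of_map_sub_le {ι : Type*} [Finite ι] (S : ι → Set K) (p : ℕ → K)
    (r : WithTop Γ) (hp : ∀ j k, j ≠ k → v (p j - p k) ≤ r)
    (hS : ∀ i, ∀ x ∈ S i, ∀ x' ∈ S i, r < v (x - x')) :
    ∃ j, p j ∉ ⋃ i, S i := by
  by_contra! hcover
  simp only [Set.mem_iUnion] at hcover
  choose g hg using hcover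
  obtain ⟨j, k, hjk, hgjk⟩ := Finite.exists_ne_map_eq_of_infinite g
  exact (hp j k hjk).not_gt (hS (g j) _ (hg j) _ (hgjk ▸ hg k))

end AddValuation

theorem stmt_17_general {K Γ : Type*} [Field K] [AddCommGroup Γ] [LinearOrder Γ] [IsOrderedAddMonoid Γ]
    (v : AddValuation K (WithTop Γ))
    -- the residue field is infinite: infinitely many residue classes in the valuation ring
    (hres : ∃ f : ℕ → K, (∀ i, (0 : WithTop Γ) ≤ v (f i)) ∧
      ∀ i j, i ≠ j → v (f i - f j) = 0)
    (c : K) (γ : Γ)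
    (m : ℕ) (Bs : Fin m → Set K)
    (hballs : ∀ i, ∃ c' : K, ∃ γ' : Γ,
      Bs i = {x : K | (γ' : WithTop Γ) < v (x - c')} ∨
      Bs i = {x : K | (γ' : WithTop Γ) ≤ v (x - c')})
    (hsub : ∀ i, Bs i ⊆ {x : K | (γ : WithTop Γ) < v (x - c)})
    (hproper : ∀ i, Bs i ≠ {x : K | (γ : WithTop Γ) < v (x - c)}) :
    ({x : K | (γ : WithTop Γ) < v (x - c)} \ ⋃ i, Bs i).Nonempty := by
  obtain ⟨f, hf0, hf⟩ := hres
  have hsep : ∀ i, ∃ y, (γ : WithTop Γ) < v (y - c) ∧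
      ∃ c' ∈ Bs i, ∀ x ∈ Bs i, ∀ x' ∈ Bs i, v (y - c') < v (x - x') := fun i => by
    obtain ⟨y, hyB, hyBi⟩ := Set.exists_of_ssubset ((hsub i).ssubset_of_ne (hproper i))
    exact ⟨y, hyB, AddValuation.IsBall.exists_center_map_sub_lt (hballs i) hyBi⟩
  choose y hyB c' hc' hdiam using hsep
  have hdist : ∀ i, (γ : WithTop Γ) < v (y i - c' i) := fun i =>
    (lt_min (hyB i) (hsub i (hc' i))).trans_le (v.min_map_sub_le_map_sub _ _ c)
  obtain ⟨e, he, hemin⟩ := AddValuation.exists_le_forall_le_of_finite _ hdist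
  obtain ⟨p, hpB, hp⟩ := AddValuation.exists_seq_map_sub_eq hf0 hf c e
  obtain ⟨j, hj⟩ := AddValuation.exists_notMem_iUnion_of_map_sub_le Bs p (v e)
    (fun j k hjk => (hp j k hjk).le) fun i x hx x' hx' => (hemin i).trans_lt (hdiam i x hx x' hx')
  exact ⟨p j, he.trans_le (hpB j), hj⟩

/-- In an algebraically closed valued field with infinite residue field, a ball minus
finitely many proper sub-balls is nonempty. -/
theorem stmt_17 {K Γ : Type*} [Field K] [IsAlgClosed K] [AddCommGroup Γ] [LinearOrder Γ] [IsOrderedAddMonoid Γ]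
    (v : AddValuation K (WithTop Γ))
    -- the residue field is infinite: infinitely many residue classes in the valuation ring
    (hres : ∃ f : ℕ → K, (∀ i, (0 : WithTop Γ) ≤ v (f i)) ∧
      ∀ i j, i ≠ j → v (f i - f j) = 0)
    (c : K) (γ : Γ)
    (m : ℕ) (Bs : Fin m → Set K)
    (hballs : ∀ i, ∃ c' : K, ∃ γ' : Γ,
      Bs i = {x : K | (γ' : WithTop Γ) < v (x - c')} ∨
      Bs i = {x : K | (γ' : WithTop Γ) ≤ v (x - c')})
    (hsub : ∀ i, Bs i ⊆ {x : K | (γ : WithTop Γ) < v (x - c)})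
    (hproper : ∀ i, Bs i ≠ {x : K | (γ : WithTop Γ) < v (x - c)}) :
    ({x : K | (γ : WithTop Γ) < v (x - c)} \ ⋃ i, Bs i).Nonempty :=
  stmt_17_general v hres c γ m Bs hballs hsub hproper
end
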